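/- The inner product null space of the dual plane vector is exactly the Euclidean plane: for all x ∈ ℝ³, every unit vector n ∈ ℝ³ (embedded in V as (n,0,0)) and every d ∈ ℝ, B(C(x), n + d e∞) = 0 if and only if ⟪x, n⟫ = d. -/

import Mathlib

open scoped RealInnerProductSpace

/-- The vector space of the conformal model: `ℝ³ × ℝ × ℝ`,
with elements `(v, α, β)`. -/
abbrev ConfV : Type := (EuclideanSpace ℝ (Fin 3)) × ℝ × ℝ

/-- The companion bilinear form of the conformal quadratic form. -/
noncomputable def confB : LinearMap.BilinForm ℝ ConfV :=
  LinearMap.mk₂ ℝ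
    (fun x y => 2 * ⟪x.1, y.1⟫ - 2 * (x.2.1 * y.2.2 + x.2.2 * y.2.1))
    (fun x x' y => by
      simp only [Prod.fst_add, Prod.snd_add, inner_add_left]; ring)
    (fun a x y => by
      simp only [Prod.smul_fst, Prod.smul_snd, real_inner_smul_left, smul_eq_mul]; ring)
    (fun x y y' => by
      simp only [Prod.fst_add, Prod.snd_add, inner_add_right]; ring)
    (fun a x y => by
      simp only [Prod.smul_fst, Prod.smul_snd, real_inner_smul_right, smul_eq_mul]; ring)

/-- The conformal quadratic form `Q (v, α, β) = ‖v‖² - 2αβ` of signature `(4,1)`. -/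
noncomputable def Qc : QuadraticForm ℝ ConfV where
  toFun x := ‖x.1‖ ^ 2 - 2 * x.2.1 * x.2.2
  toFun_smul a x := by
    simp only [Prod.smul_fst, Prod.smul_snd, norm_smul, mul_pow, Real.norm_eq_abs, sq_abs,
      smul_eq_mul]
    ring
  exists_companion' :=
    ⟨confB, fun x y => by
      simp only [confB, LinearMap.mk₂_apply, Prod.fst_add, Prod.snd_add, norm_add_sq_real]
      ring⟩

/-- The null vector representing the origin. -/
noncomputable def e₀ : ConfV := (0, 1, 0)

/-- The null vector representing infinity. -/
noncomputable def eInf : ConfV := (0, 0, 1)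

/-- The symmetric bilinear form associated to `Qc`. -/
noncomputable def Bc (x y : ConfV) : ℝ := (Qc (x + y) - Qc x - Qc y) / 2

/-- The conformal embedding `C x = x + ½‖x‖² e∞ + e₀`. -/
noncomputable def confC (x : EuclideanSpace ℝ (Fin 3)) : ConfV := (x, 1, ‖x‖ ^ 2 / 2)

theorem Qc_apply (z : ConfV) : Qc z = ‖z.1‖ ^ 2 - 2 * z.2.1 * z.2.2 := rfl

theorem Bc_apply (x y : ConfV) : Bc x y = ⟪x.1, y.1⟫ - (x.2.1 * y.2.2 + x.2.2 * y.2.1) := by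
  simp only [Bc, Qc_apply, Prod.fst_add, Prod.snd_add, norm_add_sq_real]
  ring

theorem Bc_confC (x : EuclideanSpace ℝ (Fin 3)) (y : ConfV) :
    Bc (confC x) y = ⟪x, y.1⟫ - (y.2.2 + ‖x‖ ^ 2 / 2 * y.2.1) := by
  rw [Bc_apply, confC]
  ring

theorem Bc_confC_dualPlane (x n : EuclideanSpace ℝ (Fin 3)) (d : ℝ) :
    Bc (confC x) ((n, 0, 0) + d • eInf) = ⟪x, n⟫ - d := by
  simp [Bc_confC, eInf]

theorem dual_plane_ipns_general (x n : EuclideanSpace ℝ (Fin 3)) (d : ℝ) :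
    Bc (confC x) ((n, 0, 0) + d • eInf) = 0 ↔ ⟪x, n⟫ = d := by
  rw [Bc_confC_dualPlane, sub_eq_zero]

theorem dual_plane_ipns (x n : EuclideanSpace ℝ (Fin 3)) (hn : ‖n‖ = 1) (d : ℝ) :
    Bc (confC x) ((n, 0, 0) + d • eInf) = 0 ↔ ⟪x, n⟫ = d :=
  dual_plane_ipns_general x n d
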